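/- arXiv:2403.19908 — 6 statements merged into one kernel-verified Lean document; each statement's English description precedes it below -/
import Mathlib

section
/- Let (H,·,1,Δ,ε,S) be a Hopf algebra over a field k and let ∘ be an associative multiplication on H making (H,∘,Δ,ε) a nonunital bialgebra, such that the distributivity law a∘(b·S(c)·d) = (a₁∘b)·S(a₂∘c)·(a₃∘d) holds for all a,b,c,d ∈ H, and such that the unit 1 of · is central for ∘ (1∘a = a∘1 for all a). Then σ : H → H, σ(a) = a∘1, is an endomorphism of the induced Hopf heap: Δ(σ(a)) = σ(a₁) ⊗ σ(a₂), ε(σ(a)) = ε(a), and σ(a·S(b)·c) = σ(a)·S(σ(b))·σ(c) for all a,b,c ∈ H. -/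
open TensorProduct

noncomputable section

variable (k : Type*) [Field k]

section Shuffles

variable (A B P Q R S : Type*)
  [AddCommGroup A] [Module k A] [AddCommGroup B] [Module k B]
  [AddCommGroup P] [Module k P] [AddCommGroup Q] [Module k Q]
  [AddCommGroup R] [Module k R] [AddCommGroup S] [Module k S]

/-- `(a ⊗ b) ⊗ ((p ⊗ q) ⊗ (r ⊗ s)) ↦ (a ⊗ (q ⊗ r)) ⊗ (b ⊗ (p ⊗ s))`, the shuffle appearing in
the compatibility of a Hopf-heap bracket with comultiplication:
`Δ([a,b,c]) = [a₁,b₂,c₁] ⊗ [a₂,b₁,c₂]`. -/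
def sweedlerShuffle :
    ((A ⊗[k] B) ⊗[k] ((P ⊗[k] Q) ⊗[k] (R ⊗[k] S))) →ₗ[k]
      ((A ⊗[k] (Q ⊗[k] R)) ⊗[k] (B ⊗[k] (P ⊗[k] S))) :=
  (tensorTensorTensorComm k A B (Q ⊗[k] R) (P ⊗[k] S)).toLinearMap ∘ₗ
    (TensorProduct.map LinearMap.id
      ((tensorTensorTensorComm k Q P R S).toLinearMap ∘ₗ
        TensorProduct.map (TensorProduct.comm k P Q).toLinearMap LinearMap.id))

/-- `u₁ ⊗ (u₂ ⊗ (u₃ ⊗ u₄)) ↦ (u₁ ⊗ (u₄ ⊗ u₂)) ⊗ u₃`, the shuffle appearing in the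
Rota–Baxter identity. -/
def rbShuffle :
    (A ⊗[k] (P ⊗[k] (Q ⊗[k] R))) →ₗ[k] ((A ⊗[k] (R ⊗[k] P)) ⊗[k] Q) :=
  (TensorProduct.assoc k A (R ⊗[k] P) Q).symm.toLinearMap ∘ₗ
    TensorProduct.map LinearMap.id
      ((TensorProduct.comm k Q (R ⊗[k] P)).toLinearMap ∘ₗ
        (TensorProduct.assoc k Q R P).toLinearMap ∘ₗ
        (TensorProduct.comm k P (Q ⊗[k] R)).toLinearMap)

end Shuffles

section Mul

variable {C : Type*} [AddCommGroup C] [Module k C]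

/-- Right multiplication `a ↦ μ (a ⊗ b)` by a fixed element, for a bilinear product `μ`. -/
def rmulBy (μ : (C ⊗[k] C) →ₗ[k] C) (b : C) : C →ₗ[k] C :=
  μ ∘ₗ ((TensorProduct.mk k C C).flip b)

end Mul

section Heap

variable {C : Type*} [AddCommGroup C] [Module k C] [Coalgebra k C]

/-- Iterated comultiplication `a ↦ a₁ ⊗ (a₂ ⊗ a₃)`. -/
def comul2 : C →ₗ[k] (C ⊗[k] (C ⊗[k] C)) :=
  (TensorProduct.map LinearMap.id Coalgebra.comul) ∘ₗ Coalgebra.comul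

/-- Iterated comultiplication `a ↦ a₁ ⊗ (a₂ ⊗ (a₃ ⊗ a₄))`. -/
def comul3 : C →ₗ[k] (C ⊗[k] (C ⊗[k] (C ⊗[k] C))) :=
  (TensorProduct.map LinearMap.id (comul2 k)) ∘ₗ Coalgebra.comul

/-- The pointwise ternary bracket `[a,b,c]` of a Hopf heap with structure map `χ`. -/
def br (χ : (C ⊗[k] (C ⊗[k] C)) →ₗ[k] C) (a b c : C) : C := χ (a ⊗ₜ[k] (b ⊗ₜ[k] c))

/-- `x` is a group-like element of the coalgebra `C`. -/
def IsGrouplike (x : C) : Prop :=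
  Coalgebra.comul (R := k) x = x ⊗ₜ[k] x ∧ Coalgebra.counit (R := k) x = 1

/-- `(C, Δ, ε, χ)` is a Hopf heap: `χ` is a coalgebra map `C ⊗ C^cop ⊗ C → C`
(counit and comultiplication conditions, the latter in the Sweedler form
`Δ([a,b,c]) = [a₁,b₂,c₁] ⊗ [a₂,b₁,c₂]`), the bracket is associative
(`[[a,b,c],d,h] = [a,b,[c,d,h]]`), and `[c₁,c₂,a] = ε(c)a = [a,c₁,c₂]`. -/
structure IsHopfHeap (χ : (C ⊗[k] (C ⊗[k] C)) →ₗ[k] C) : Prop where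
  counit_br : ∀ a b c : C,
    Coalgebra.counit (R := k) (br k χ a b c) =
      Coalgebra.counit (R := k) a * Coalgebra.counit (R := k) b * Coalgebra.counit (R := k) c
  comul_br : ∀ a b c : C,
    Coalgebra.comul (R := k) (br k χ a b c) =
      TensorProduct.map χ χ (sweedlerShuffle k C C C C C C
        ((Coalgebra.comul (R := k) a) ⊗ₜ[k]
          ((Coalgebra.comul (R := k) b) ⊗ₜ[k] (Coalgebra.comul (R := k) c))))
  assoc_br : ∀ a b c d h : C,
    br k χ (br k χ a b c) d h = br k χ a b (br k χ c d h)
  left_cancel : ∀ c a : C,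
    χ ((TensorProduct.assoc k C C C) ((Coalgebra.comul (R := k) c) ⊗ₜ[k] a)) =
      Coalgebra.counit (R := k) c • a
  right_cancel : ∀ c a : C,
    χ (a ⊗ₜ[k] (Coalgebra.comul (R := k) c)) = Coalgebra.counit (R := k) c • a

/-- `B` is a Rota–Baxter operator on the Hopf heap `(C, Δ, χ)`:
`B [a,b,c] = [B a, B b, B c]` and
`B(a₁) ⊗ B(a₂) = [B(a)₁, B(B(a)₄), B(B(a)₂)] ⊗ B(a)₃`. -/
structure IsRBOp (χ : (C ⊗[k] (C ⊗[k] C)) →ₗ[k] C) (B : C →ₗ[k] C) : Prop where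
  map_br : ∀ a b c : C, B (br k χ a b c) = br k χ (B a) (B b) (B c)
  rb : ∀ a : C,
    TensorProduct.map B B (Coalgebra.comul (R := k) a) =
      TensorProduct.map (χ ∘ₗ TensorProduct.map LinearMap.id (TensorProduct.map B B))
        LinearMap.id (rbShuffle k C C C C (comul3 k (B a)))

/-- The multiplication `a ·ₓ b = [a, x, b]` of the Hopf algebra `H_x(C)`, as a linear map. -/
def heapMul (χ : (C ⊗[k] (C ⊗[k] C)) →ₗ[k] C) (x : C) : (C ⊗[k] C) →ₗ[k] C :=
  χ ∘ₗ TensorProduct.map LinearMap.id (TensorProduct.mk k C C x)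

/-- The antipode `S_x(a) = [x, a, x]` of the Hopf algebra `H_x(C)`, as a linear map. -/
def heapAntipode (χ : (C ⊗[k] (C ⊗[k] C)) →ₗ[k] C) (x : C) : C →ₗ[k] C :=
  χ ∘ₗ (TensorProduct.mk k C (C ⊗[k] C) x) ∘ₗ ((TensorProduct.mk k C C).flip x)

end Heap

section HeapHom

variable {C D : Type*} [AddCommGroup C] [Module k C] [Coalgebra k C]
  [AddCommGroup D] [Module k D] [Coalgebra k D]

/-- `f` is a homomorphism of Hopf heaps: a coalgebra map preserving the bracket. -/
def IsHeapHom (χC : (C ⊗[k] (C ⊗[k] C)) →ₗ[k] C) (χD : (D ⊗[k] (D ⊗[k] D)) →ₗ[k] D)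
    (f : C →ₗ[k] D) : Prop :=
  (∀ a : C, Coalgebra.comul (R := k) (f a) = TensorProduct.map f f (Coalgebra.comul (R := k) a)) ∧
  (∀ a : C, Coalgebra.counit (R := k) (f a) = Coalgebra.counit (R := k) a) ∧
  (∀ a b c : C, f (br k χC a b c) = br k χD (f a) (f b) (f c))

end HeapHom

section HopfAlg

variable (H : Type*) [Ring H] [HopfAlgebra k H]

/-- The Hopf-heap structure map `a ⊗ b ⊗ c ↦ a · S(b) · c` of a Hopf algebra. -/
def hopfHeapChi : (H ⊗[k] (H ⊗[k] H)) →ₗ[k] H :=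
  (LinearMap.mul' k H) ∘ₗ TensorProduct.map LinearMap.id
    ((LinearMap.mul' k H) ∘ₗ TensorProduct.map (HopfAlgebra.antipode (R := k)) LinearMap.id)

/-- The triple multiplication `a ⊗ (b ⊗ c) ↦ a·(b·c)`. -/
def mulTriple : (H ⊗[k] (H ⊗[k] H)) →ₗ[k] H :=
  (LinearMap.mul' k H) ∘ₗ TensorProduct.map LinearMap.id (LinearMap.mul' k H)

end HopfAlg

end

/-! Since `1` is group-like, right multiplication `σ = (· ∘ 1)` is a coalgebra map. Centrality
of `1` gives `σ(a) = 1 ∘ a`, and the iterated coproduct of `1` is `1 ⊗ 1 ⊗ 1`, so the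
distributivity law at `a = 1` reads `σ(b·S(c)·d) = σ(b)·S(σ(c))·σ(d)`. -/

theorem rmulBy_apply {k : Type*} [Field k] {C : Type*} [AddCommGroup C] [Module k C]
    (μ : (C ⊗[k] C) →ₗ[k] C) (b a : C) : rmulBy k μ b a = μ (a ⊗ₜ[k] b) := rfl

section CoalgebraProduct

variable {k : Type*} [Field k] {C : Type*} [AddCommGroup C] [Module k C] [Coalgebra k C]
  (μ : (C ⊗[k] C) →ₗ[k] C)

theorem comul2_of_comul_eq_tmul_self {g : C} (hg : Coalgebra.comul (R := k) g = g ⊗ₜ[k] g) :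
    comul2 k g = g ⊗ₜ[k] (g ⊗ₜ[k] g) := by
  simp only [comul2, LinearMap.comp_apply, hg, TensorProduct.map_tmul, LinearMap.id_apply]

theorem comul_rmulBy_of_comul_eq_tmul_self
    (hcomul : ∀ a b : C, Coalgebra.comul (R := k) (μ (a ⊗ₜ[k] b)) =
      TensorProduct.map μ μ ((tensorTensorTensorComm k C C C C)
        ((Coalgebra.comul (R := k) a) ⊗ₜ[k] (Coalgebra.comul (R := k) b))))
    {g : C} (hg : Coalgebra.comul (R := k) g = g ⊗ₜ[k] g) (a : C) :
    Coalgebra.comul (R := k) (rmulBy k μ g a) =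
      TensorProduct.map (rmulBy k μ g) (rmulBy k μ g) (Coalgebra.comul (R := k) a) := by
  rw [rmulBy_apply, hcomul, hg]
  induction Coalgebra.comul (R := k) a using TensorProduct.induction_on with
  | zero => simp only [TensorProduct.zero_tmul, map_zero]
  | tmul x y => simp only [tensorTensorTensorComm_tmul, TensorProduct.map_tmul, rmulBy_apply]
  | add u v hu hv => simp only [TensorProduct.add_tmul, map_add, hu, hv]

theorem counit_rmulBy_of_counit_eq_one
    (hcounit : ∀ a b : C, Coalgebra.counit (R := k) (μ (a ⊗ₜ[k] b)) =
      Coalgebra.counit (R := k) a * Coalgebra.counit (R := k) b)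
    {g : C} (hg : Coalgebra.counit (R := k) g = 1) (a : C) :
    Coalgebra.counit (R := k) (rmulBy k μ g a) = Coalgebra.counit (R := k) a := by
  rw [rmulBy_apply, hcounit, hg, mul_one]

end CoalgebraProduct

theorem mul_heapBracket_of_comul_eq_tmul_self {k : Type*} [Field k] {H : Type*} [Ring H]
    [HopfAlgebra k H] (μ : (H ⊗[k] H) →ₗ[k] H)
    (hdist : ∀ a b c d : H, μ (a ⊗ₜ[k] (b * HopfAlgebra.antipode (R := k) c * d)) =
      mulTriple k H ((TensorProduct.map (rmulBy k μ b)
        (TensorProduct.map ((HopfAlgebra.antipode (R := k)) ∘ₗ (rmulBy k μ c))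
          (rmulBy k μ d))) (comul2 k a)))
    {g : H} (hg : Coalgebra.comul (R := k) g = g ⊗ₜ[k] g) (b c d : H) :
    μ (g ⊗ₜ[k] (b * HopfAlgebra.antipode (R := k) c * d)) =
      μ (g ⊗ₜ[k] b) * HopfAlgebra.antipode (R := k) (μ (g ⊗ₜ[k] c)) * μ (g ⊗ₜ[k] d) := by
  rw [hdist, comul2_of_comul_eq_tmul_self hg, mul_assoc]
  rfl

theorem hopfTruss_cocycle_is_heap_endomorphism_general {k : Type*} [Field k] {H : Type*} [Ring H]
    [HopfAlgebra k H] (μ : (H ⊗[k] H) →ₗ[k] H)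
    (hcomul : ∀ a b : H, Coalgebra.comul (R := k) (μ (a ⊗ₜ[k] b)) =
      TensorProduct.map μ μ ((tensorTensorTensorComm k H H H H)
        ((Coalgebra.comul (R := k) a) ⊗ₜ[k] (Coalgebra.comul (R := k) b))))
    (hcounit : ∀ a b : H, Coalgebra.counit (R := k) (μ (a ⊗ₜ[k] b)) =
      Coalgebra.counit (R := k) a * Coalgebra.counit (R := k) b)
    -- the distributivity law `a∘(b·S(c)·d) = (a₁∘b)·S(a₂∘c)·(a₃∘d)`
    (hdist : ∀ a b c d : H, μ (a ⊗ₜ[k] (b * HopfAlgebra.antipode (R := k) c * d)) =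
      mulTriple k H ((TensorProduct.map (rmulBy k μ b)
        (TensorProduct.map ((HopfAlgebra.antipode (R := k)) ∘ₗ (rmulBy k μ c))
          (rmulBy k μ d))) (comul2 k a)))
    -- `1` is central for `∘`
    (hcentral : ∀ a : H, μ ((1 : H) ⊗ₜ[k] a) = μ (a ⊗ₜ[k] (1 : H))) :
    (∀ a : H, Coalgebra.comul (R := k) (rmulBy k μ (1 : H) a) =
      TensorProduct.map (rmulBy k μ (1 : H)) (rmulBy k μ (1 : H))
        (Coalgebra.comul (R := k) a)) ∧
    (∀ a : H, Coalgebra.counit (R := k) (rmulBy k μ (1 : H) a) =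
      Coalgebra.counit (R := k) a) ∧
    (∀ a b c : H, rmulBy k μ (1 : H) (a * HopfAlgebra.antipode (R := k) b * c) =
      rmulBy k μ (1 : H) a *
        HopfAlgebra.antipode (R := k) (rmulBy k μ (1 : H) b) * rmulBy k μ (1 : H) c) := by
  have comul_one : Coalgebra.comul (R := k) (1 : H) = (1 : H) ⊗ₜ[k] (1 : H) :=
    Bialgebra.comul_one
  refine ⟨comul_rmulBy_of_comul_eq_tmul_self μ hcomul comul_one,
    counit_rmulBy_of_counit_eq_one μ hcounit Bialgebra.counit_one, fun a b c => ?_⟩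
  simp only [rmulBy_apply, ← hcentral]
  exact mul_heapBracket_of_comul_eq_tmul_self μ hdist comul_one a b c

/-- in a Hopf truss whose unit `1` is central for `∘`, the cocycle
`σ(a) := a∘1` is an endomorphism of the induced Hopf heap `[a,b,c] = a·S(b)·c`. -/
theorem hopfTruss_cocycle_is_heap_endomorphism {k : Type*} [Field k] {H : Type*} [Ring H]
    [HopfAlgebra k H] (μ : (H ⊗[k] H) →ₗ[k] H)
    (hassoc : ∀ a b c : H, μ (μ (a ⊗ₜ[k] b) ⊗ₜ[k] c) = μ (a ⊗ₜ[k] μ (b ⊗ₜ[k] c)))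
    (hcomul : ∀ a b : H, Coalgebra.comul (R := k) (μ (a ⊗ₜ[k] b)) =
      TensorProduct.map μ μ ((tensorTensorTensorComm k H H H H)
        ((Coalgebra.comul (R := k) a) ⊗ₜ[k] (Coalgebra.comul (R := k) b))))
    (hcounit : ∀ a b : H, Coalgebra.counit (R := k) (μ (a ⊗ₜ[k] b)) =
      Coalgebra.counit (R := k) a * Coalgebra.counit (R := k) b)
    -- the distributivity law `a∘(b·S(c)·d) = (a₁∘b)·S(a₂∘c)·(a₃∘d)`
    (hdist : ∀ a b c d : H, μ (a ⊗ₜ[k] (b * HopfAlgebra.antipode (R := k) c * d)) =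
      mulTriple k H ((TensorProduct.map (rmulBy k μ b)
        (TensorProduct.map ((HopfAlgebra.antipode (R := k)) ∘ₗ (rmulBy k μ c))
          (rmulBy k μ d))) (comul2 k a)))
    -- `1` is central for `∘`
    (hcentral : ∀ a : H, μ ((1 : H) ⊗ₜ[k] a) = μ (a ⊗ₜ[k] (1 : H))) :
    (∀ a : H, Coalgebra.comul (R := k) (rmulBy k μ (1 : H) a) =
      TensorProduct.map (rmulBy k μ (1 : H)) (rmulBy k μ (1 : H))
        (Coalgebra.comul (R := k) a)) ∧
    (∀ a : H, Coalgebra.counit (R := k) (rmulBy k μ (1 : H) a) =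
      Coalgebra.counit (R := k) a) ∧
    (∀ a b c : H, rmulBy k μ (1 : H) (a * HopfAlgebra.antipode (R := k) b * c) =
      rmulBy k μ (1 : H) a *
        HopfAlgebra.antipode (R := k) (rmulBy k μ (1 : H) b) * rmulBy k μ (1 : H) c) :=
  hopfTruss_cocycle_is_heap_endomorphism_general μ hcomul hcounit hdist hcentral
end

section
/- Let B be a Rota-Baxter operator on a Hopf heap (C, Δ, [−,−,−]) over a field k, and let ψ : C → C be a bijective Hopf heap homomorphism (a Hopf heap automorphism). Then B^{(ψ)} := ψ ∘ B ∘ ψ⁻¹ is also a Rota-Baxter operator on (C, Δ, [−,−,−]). -/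
open TensorProduct

/-! `ψ` intertwines `B` with `ψ ∘ B ∘ ψ⁻¹`. Any surjective, comultiplicative, bracket-preserving
map `f` with `B' ∘ f = f ∘ B` carries both Rota–Baxter identities from `B` to `B'`: evaluate them
at `f a`, push `f` through `Δ`, the iterated coproduct, the shuffle and the bracket, and use the
identity for `B` at `a`. -/

section Transport

variable {k : Type*} [Field k] {C D : Type*} [AddCommGroup C] [Module k C] [Coalgebra k C]
  [AddCommGroup D] [Module k D] [Coalgebra k D]

theorem comul2_comp_of_comul_comp {f : C →ₗ[k] D}
    (hf : Coalgebra.comul ∘ₗ f = map f f ∘ₗ Coalgebra.comul) :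
    comul2 k ∘ₗ f = map f (map f f) ∘ₗ comul2 k := by
  rw [comul2, comul2, LinearMap.comp_assoc, hf, ← LinearMap.comp_assoc, ← map_comp,
    LinearMap.id_comp, hf, ← LinearMap.comp_assoc, ← map_comp, LinearMap.comp_id]

theorem comul3_comp_of_comul_comp {f : C →ₗ[k] D}
    (hf : Coalgebra.comul ∘ₗ f = map f f ∘ₗ Coalgebra.comul) :
    comul3 k ∘ₗ f = map f (map f (map f f)) ∘ₗ comul3 k := by
  rw [comul3, comul3, LinearMap.comp_assoc, hf, ← LinearMap.comp_assoc, ← map_comp,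
    LinearMap.id_comp, comul2_comp_of_comul_comp hf, ← LinearMap.comp_assoc, ← map_comp,
    LinearMap.comp_id]

theorem IsRBOp.of_surjective {χC : (C ⊗[k] (C ⊗[k] C)) →ₗ[k] C}
    {χD : (D ⊗[k] (D ⊗[k] D)) →ₗ[k] D} {B : C →ₗ[k] C} (hB : IsRBOp k χC B)
    {f : C →ₗ[k] D} (hf : Function.Surjective f)
    (hf_comul : ∀ a, Coalgebra.comul (R := k) (f a) = map f f (Coalgebra.comul (R := k) a))
    (hf_br : ∀ a b c, f (br k χC a b c) = br k χD (f a) (f b) (f c))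
    {B' : D →ₗ[k] D} (hB' : ∀ a, B' (f a) = f (B a)) : IsRBOp k χD B' := by
  have hshuffle : map (χD ∘ₗ map LinearMap.id (map B' B')) LinearMap.id ∘ₗ
        rbShuffle k D D D D ∘ₗ map f (map f (map f f)) =
      map f f ∘ₗ map (χC ∘ₗ map LinearMap.id (map B B)) LinearMap.id ∘ₗ
        rbShuffle k C C C C := by
    have hχ : ∀ a b c, χD (f a ⊗ₜ (f b ⊗ₜ f c)) = f (χC (a ⊗ₜ (b ⊗ₜ c))) :=
      fun a b c => (hf_br a b c).symm
    ext a b c d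
    simp [rbShuffle, hB', hχ]
  constructor
  · intro a b c
    obtain ⟨a, rfl⟩ := hf a
    obtain ⟨b, rfl⟩ := hf b
    obtain ⟨c, rfl⟩ := hf c
    rw [← hf_br, hB', hB.map_br, hf_br, hB', hB', hB']
  · intro a
    obtain ⟨a, rfl⟩ := hf a
    calc map B' B' (Coalgebra.comul (f a))
        = map f f (map B B (Coalgebra.comul a)) := by
          have hB'f : B' ∘ₗ f = f ∘ₗ B := LinearMap.ext hB'
          rw [hf_comul, ← LinearMap.comp_apply, ← map_comp, hB'f, map_comp, LinearMap.comp_apply]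
      _ = map f f (map (χC ∘ₗ map LinearMap.id (map B B)) LinearMap.id
            (rbShuffle k C C C C (comul3 k (B a)))) := by rw [hB.rb]
      _ = _ := by
          rw [hB', ← LinearMap.comp_apply (comul3 k) f,
            comul3_comp_of_comul_comp (LinearMap.ext hf_comul)]
          exact (LinearMap.congr_fun hshuffle (comul3 k (B a))).symm

end Transport

theorem rbOp_conjugate_general {k : Type*} [Field k] {C : Type*} [AddCommGroup C] [Module k C]
    [Coalgebra k C] (χ : (C ⊗[k] (C ⊗[k] C)) →ₗ[k] C)
    (B : C →ₗ[k] C) (hB : IsRBOp k χ B)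
    (ψ : C ≃ₗ[k] C) (hψ : IsHeapHom k χ χ ψ.toLinearMap) :
    IsRBOp k χ (ψ.toLinearMap ∘ₗ B ∘ₗ ψ.symm.toLinearMap) :=
  hB.of_surjective ψ.surjective hψ.1 hψ.2.2 fun a => by simp

/-- conjugating a Rota–Baxter operator on a Hopf heap by a Hopf heap
automorphism again yields a Rota–Baxter operator. -/
theorem rbOp_conjugate {k : Type*} [Field k] {C : Type*} [AddCommGroup C] [Module k C]
    [Coalgebra k C] (χ : (C ⊗[k] (C ⊗[k] C)) →ₗ[k] C) (hχ : IsHopfHeap k χ)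
    (B : C →ₗ[k] C) (hB : IsRBOp k χ B)
    (ψ : C ≃ₗ[k] C) (hψ : IsHeapHom k χ χ ψ.toLinearMap) :
    IsRBOp k χ (ψ.toLinearMap ∘ₗ B ∘ₗ ψ.symm.toLinearMap) :=
  rbOp_conjugate_general χ B hB ψ hψ
end

section
/- Let H be a commutative Hopf algebra over a field k with antipode S, and let B be a Rota-Baxter co-operator on H satisfying S ∘ B = B ∘ S. Then B is a Rota-Baxter operator on the Hopf heap Hp(H) with [a,b,c] = a·S(b)·c; explicitly, B(a·S(b)·c) = B(a)·S(B(b))·B(c) for all a,b,c ∈ H, and B(a₁) ⊗ B(a₂) = B(a)₁·S(B(B(a)₄))·B(B(a)₂) ⊗ B(a)₃ for all a ∈ H. -/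
open TensorProduct

section HopfHeapOfHopfAlgebra

variable {k H : Type*} [Field k]

@[simp]
theorem hopfHeapChi_tmul [Ring H] [HopfAlgebra k H] (a b c : H) :
    hopfHeapChi k H (a ⊗ₜ[k] (b ⊗ₜ[k] c)) = a * (HopfAlgebra.antipode k b * c) :=
  rfl

theorem map_br_hopfHeapChi [Ring H] [HopfAlgebra k H] {B : H →ₗ[k] H}
    (hBmul : ∀ a b : H, B (a * b) = B a * B b)
    (hSB : ∀ a : H, HopfAlgebra.antipode k (B a) = B (HopfAlgebra.antipode k a)) (a b c : H) :
    B (br k (hopfHeapChi k H) a b c) = br k (hopfHeapChi k H) (B a) (B b) (B c) := by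
  simp only [br, hopfHeapChi_tmul, hBmul, hSB]

/-- Pointwise: `[x, B p, B q] = x · B(S p) · B q = x · B(q · S p)`. -/
theorem hopfHeapChi_comp_map_map [CommRing H] [HopfAlgebra k H] {B : H →ₗ[k] H}
    (hBmul : ∀ a b : H, B (a * b) = B a * B b)
    (hSB : ∀ a : H, HopfAlgebra.antipode k (B a) = B (HopfAlgebra.antipode k a)) :
    hopfHeapChi k H ∘ₗ TensorProduct.map LinearMap.id (TensorProduct.map B B) =
      LinearMap.mul' k H ∘ₗ TensorProduct.map LinearMap.id
        (B ∘ₗ LinearMap.mul' k H ∘ₗ (TensorProduct.comm k H H).toLinearMap ∘ₗ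
          TensorProduct.map (HopfAlgebra.antipode k) LinearMap.id) := by
  ext x p q
  simp [hSB, ← hBmul, mul_comm]

end HopfHeapOfHopfAlgebra

theorem rb_cooperator_gives_rbOp_general (k : Type*) [Field k] (H : Type*) [CommRing H]
    [HopfAlgebra k H] (B : H →ₗ[k] H)
    -- `B` is an algebra map
    (hBmul : ∀ a b : H, B (a * b) = B a * B b)
    -- `S ∘ B = B ∘ S`
    (hSB : ∀ a : H, HopfAlgebra.antipode (R := k) (B a) = B (HopfAlgebra.antipode (R := k) a))
    -- the Rota–Baxter co-operator identity
    -- `B(a₁) ⊗ B(a₂) = B(a)₁ · B(B(a)₂ · S(B(a)₄)) ⊗ B(a)₃`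
    (hco : ∀ a : H, TensorProduct.map B B (Coalgebra.comul (R := k) a) =
      TensorProduct.map
        ((LinearMap.mul' k H) ∘ₗ TensorProduct.map LinearMap.id
          (B ∘ₗ (LinearMap.mul' k H) ∘ₗ (TensorProduct.comm k H H).toLinearMap ∘ₗ
            TensorProduct.map (HopfAlgebra.antipode (R := k)) LinearMap.id))
        LinearMap.id (rbShuffle k H H H H (comul3 k (B a)))) :
    IsRBOp k (hopfHeapChi k H) B :=
  ⟨map_br_hopfHeapChi hBmul hSB, fun a => by rw [hco a, hopfHeapChi_comp_map_map hBmul hSB]⟩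

/-- a Rota–Baxter co-operator `B` on a commutative Hopf algebra `H` with
`S ∘ B = B ∘ S` is a Rota–Baxter operator on the Hopf heap `Hp(H)` with
`[a,b,c] = a·S(b)·c`. -/
theorem rb_cooperator_gives_rbOp (k : Type*) [Field k] (H : Type*) [CommRing H]
    [HopfAlgebra k H] (B : H →ₗ[k] H)
    -- `B` is an algebra map
    (hB1 : B 1 = 1) (hBmul : ∀ a b : H, B (a * b) = B a * B b)
    -- `S ∘ B = B ∘ S`
    (hSB : ∀ a : H, HopfAlgebra.antipode (R := k) (B a) = B (HopfAlgebra.antipode (R := k) a))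
    -- the Rota–Baxter co-operator identity
    -- `B(a₁) ⊗ B(a₂) = B(a)₁ · B(B(a)₂ · S(B(a)₄)) ⊗ B(a)₃`
    (hco : ∀ a : H, TensorProduct.map B B (Coalgebra.comul (R := k) a) =
      TensorProduct.map
        ((LinearMap.mul' k H) ∘ₗ TensorProduct.map LinearMap.id
          (B ∘ₗ (LinearMap.mul' k H) ∘ₗ (TensorProduct.comm k H H).toLinearMap ∘ₗ
            TensorProduct.map (HopfAlgebra.antipode (R := k)) LinearMap.id))
        LinearMap.id (rbShuffle k H H H H (comul3 k (B a)))) :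
    IsRBOp k (hopfHeapChi k H) B :=
  rb_cooperator_gives_rbOp_general k H B hBmul hSB hco
end

section
/- Let B be a Rota-Baxter operator on a commutative Hopf heap (C, Δ, [−,−,−]) over a field k and let x ∈ C be a group-like element with B(x) = x. Then B is a Rota-Baxter co-operator on the commutative Hopf algebra H_x(C): B is an algebra map for the product a ·_x b = [a,x,b] (i.e. B(a ·_x b) = B(a) ·_x B(b)), and B(a₁) ⊗ B(a₂) = B(a)₁ ·_x B(B(a)₂ ·_x S_x(B(a)₄)) ⊗ B(a)₃ for all a ∈ C, where S_x(a) = [x,a,x]. -/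
open TensorProduct

/-!
In `H_x(C)` the bracket of a commutative Hopf heap is recovered as `[p,u,v] = p ·ₓ (v ·ₓ Sₓ u)`,
by associativity, commutativity and `[a,x,x] = a`. A Rota–Baxter operator preserves the bracket and
fixes `x`, hence commutes with `·ₓ` and `Sₓ`; rewriting the bracket in the Rota–Baxter identity
`B(a₁) ⊗ B(a₂) = [B(a)₁, B(B(a)₄), B(B(a)₂)] ⊗ B(a)₃` in terms of `·ₓ` and `Sₓ` then gives the
co-operator identity.
-/

section HopfHeap

variable {k : Type*} [Field k] {C : Type*} [AddCommGroup C] [Module k C]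
  {χ : (C ⊗[k] (C ⊗[k] C)) →ₗ[k] C} {x : C}

@[simp]
theorem heapMul_tmul (a b : C) : heapMul k χ x (a ⊗ₜ[k] b) = br k χ a x b := rfl

@[simp]
theorem heapAntipode_apply (a : C) : heapAntipode k χ x a = br k χ x a x := rfl

variable [Coalgebra k C]

namespace IsHopfHeap

variable (hχ : IsHopfHeap k χ) (hx : IsGrouplike k x)
include hχ hx

theorem br_grouplike_grouplike_right (a : C) : br k χ a x x = a := by
  simpa [br, hx.1, hx.2] using hχ.right_cancel x a

theorem heapMul_heapMul_heapAntipode (hcomm : ∀ a b c : C, br k χ a b c = br k χ c b a)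
    (p u v : C) :
    heapMul k χ x (p ⊗ₜ[k] heapMul k χ x (v ⊗ₜ[k] heapAntipode k χ x u)) = br k χ p u v := by
  calc br k χ p x (br k χ v x (br k χ x u x))
      = br k χ p x (br k χ (br k χ v x x) u x) := by rw [hχ.assoc_br]
    _ = br k χ p x (br k χ x u v) := by rw [hχ.br_grouplike_grouplike_right hx, hcomm v]
    _ = br k χ (br k χ p x x) u v := by rw [hχ.assoc_br]
    _ = br k χ p u v := by rw [hχ.br_grouplike_grouplike_right hx]

end IsHopfHeap

namespace IsRBOp

variable {B : C →ₗ[k] C} (hB : IsRBOp k χ B) (hBx : B x = x)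
include hB hBx

theorem map_heapMul (a b : C) :
    B (heapMul k χ x (a ⊗ₜ[k] b)) = heapMul k χ x (B a ⊗ₜ[k] B b) := by
  simp only [heapMul_tmul, hB.map_br, hBx]

theorem map_heapAntipode (a : C) : B (heapAntipode k χ x a) = heapAntipode k χ x (B a) := by
  simp only [heapAntipode_apply, hB.map_br, hBx]

theorem br_comp_map_eq_heapMul_comp (hχ : IsHopfHeap k χ) (hx : IsGrouplike k x)
    (hcomm : ∀ a b c : C, br k χ a b c = br k χ c b a) :
    χ ∘ₗ TensorProduct.map LinearMap.id (TensorProduct.map B B) =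
      heapMul k χ x ∘ₗ TensorProduct.map LinearMap.id
        (B ∘ₗ heapMul k χ x ∘ₗ (TensorProduct.comm k C C).toLinearMap ∘ₗ
          TensorProduct.map (heapAntipode k χ x) LinearMap.id) := by
  ext p u v
  simp only [LinearMap.comp_apply, TensorProduct.AlgebraTensorModule.curry_apply,
    TensorProduct.curry_apply, LinearMap.coe_restrictScalars, TensorProduct.map_tmul,
    LinearMap.id_apply, LinearEquiv.coe_coe, TensorProduct.comm_tmul]
  rw [hB.map_heapMul hBx, hB.map_heapAntipode hBx,
    hχ.heapMul_heapMul_heapAntipode hx hcomm]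
  rfl

end IsRBOp

end HopfHeap

/-- a Rota–Baxter operator `B` on a commutative Hopf heap `(C,χ)` with
`B x = x` for a group-like `x` is a Rota–Baxter co-operator on the commutative Hopf algebra
`H_x(C)`: `B` is an algebra map for `·ₓ` and
`B(a₁) ⊗ B(a₂) = B(a)₁ ·ₓ B(B(a)₂ ·ₓ S_x(B(a)₄)) ⊗ B(a)₃`. -/
theorem rbOp_gives_rb_cooperator {k : Type*} [Field k] {C : Type*} [AddCommGroup C]
    [Module k C] [Coalgebra k C] (χ : (C ⊗[k] (C ⊗[k] C)) →ₗ[k] C) (hχ : IsHopfHeap k χ)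
    (hcomm : ∀ a b c : C, br k χ a b c = br k χ c b a)
    (B : C →ₗ[k] C) (hB : IsRBOp k χ B)
    (x : C) (hx : IsGrouplike k x) (hBx : B x = x) :
    -- `B` is multiplicative for `·ₓ`
    (∀ a b : C, B (heapMul k χ x (a ⊗ₜ[k] b)) = heapMul k χ x (B a ⊗ₜ[k] B b)) ∧
    -- the Rota–Baxter co-operator identity in `H_x(C)`
    (∀ a : C, TensorProduct.map B B (Coalgebra.comul (R := k) a) =
      TensorProduct.map
        ((heapMul k χ x) ∘ₗ TensorProduct.map LinearMap.id
          (B ∘ₗ (heapMul k χ x) ∘ₗ (TensorProduct.comm k C C).toLinearMap ∘ₗ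
            TensorProduct.map (heapAntipode k χ x) LinearMap.id))
        LinearMap.id (rbShuffle k C C C C (comul3 k (B a)))) :=
  ⟨hB.map_heapMul hBx, fun a => by
    rw [hB.rb a, hB.br_comp_map_eq_heapMul_comp hBx hχ hx hcomm]⟩
end

section
/- Let B be a surjective Rota-Baxter operator on a commutative Hopf heap (C, Δ, ε, [−,−,−]) over a field k with ε ∘ B = ε. Define Δ'(a) := [a₁, B(a₄), B(a₂)] ⊗ a₃ for a ∈ C (subscripts from iterated Δ). Then (C, Δ', ε) is a coalgebra (Δ' is coassociative with counit ε), the ternary operation [−,−,−] is a coalgebra map with respect to Δ' (Δ'([a,b,c]) = [a_{1'}, b_{2'}, c_{1'}] ⊗ [a_{2'}, b_{1'}, c_{2'}] in Sweedler notation for Δ'), and [a_{1'}, a_{2'}, b] = ε(a)b = [b, a_{1'}, a_{2'}]; hence C_B := (C, Δ', ε, [−,−,−]) is a Hopf heap, called the descendent Hopf heap. -/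
/-!
The Rota–Baxter identity says precisely that `Δ' ∘ B = (B ⊗ B) ∘ Δ`. Together with `ε ∘ B = ε`
and `B [a,b,c] = [B a, B b, B c]`, this makes `B` a surjection from the Hopf heap `(C, Δ, ε, χ)`
onto `(C, Δ', ε, χ)` intertwining every structure map, and each Hopf-heap axiom, being an
identity between composites of these maps, is pushed forward along it.
-/

open TensorProduct

/-- The descendent comultiplication `Δ'(a) := [a₁, B(a₄), B(a₂)] ⊗ a₃`. -/
noncomputable def descComul {k : Type*} [Field k] {C : Type*} [AddCommGroup C] [Module k C]
    [Coalgebra k C] (χ : (C ⊗[k] (C ⊗[k] C)) →ₗ[k] C) (B : C →ₗ[k] C) :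
    C →ₗ[k] (C ⊗[k] C) :=
  (TensorProduct.map (χ ∘ₗ TensorProduct.map LinearMap.id (TensorProduct.map B B))
    LinearMap.id) ∘ₗ (rbShuffle k C C C C) ∘ₗ (comul3 k)

section Transport

variable {R : Type*} [CommSemiring R] {C D : Type*} [AddCommMonoid C] [Module R C]
  [Coalgebra R C] [AddCommMonoid D] [Module R D] {f : C →ₗ[R] D} {δ : D →ₗ[R] D ⊗[R] D}

theorem coassoc_of_surjective (hf : Function.Surjective f)
    (hδ : ∀ x, δ (f x) = TensorProduct.map f f (Coalgebra.comul x)) (a : D) :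
    TensorProduct.assoc R D D D (TensorProduct.map δ LinearMap.id (δ a)) =
      TensorProduct.map LinearMap.id δ (δ a) := by
  obtain ⟨x, rfl⟩ := hf a
  have hδ' : δ ∘ₗ f = TensorProduct.map f f ∘ₗ Coalgebra.comul := LinearMap.ext hδ
  have hl : TensorProduct.map δ LinearMap.id ∘ₗ TensorProduct.map f f =
      TensorProduct.map (TensorProduct.map f f) f ∘ₗ Coalgebra.comul.rTensor C := by
    rw [LinearMap.rTensor, ← TensorProduct.map_comp, ← TensorProduct.map_comp, hδ']
    rfl
  have hr : TensorProduct.map LinearMap.id δ ∘ₗ TensorProduct.map f f =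
      TensorProduct.map f (TensorProduct.map f f) ∘ₗ Coalgebra.comul.lTensor C := by
    rw [LinearMap.lTensor, ← TensorProduct.map_comp, ← TensorProduct.map_comp, hδ']
    rfl
  rw [hδ, ← LinearMap.comp_apply (TensorProduct.map δ _), hl,
    ← LinearMap.comp_apply (TensorProduct.map _ δ), hr, LinearMap.comp_apply,
    LinearMap.comp_apply, ← TensorProduct.map_map_assoc, Coalgebra.coassoc_apply]

variable {e : D →ₗ[R] R}

theorem lid_counit_of_surjective (hf : Function.Surjective f)
    (hδ : ∀ x, δ (f x) = TensorProduct.map f f (Coalgebra.comul x))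
    (he : ∀ x, e (f x) = Coalgebra.counit x) (a : D) :
    TensorProduct.lid R D (TensorProduct.map e LinearMap.id (δ a)) = a := by
  obtain ⟨x, rfl⟩ := hf a
  have : TensorProduct.map e LinearMap.id ∘ₗ TensorProduct.map f f =
      f.lTensor R ∘ₗ Coalgebra.counit.rTensor C := by
    rw [LinearMap.rTensor, LinearMap.lTensor, ← TensorProduct.map_comp, ← TensorProduct.map_comp]
    congr 1
    exact LinearMap.ext he
  rw [hδ, ← LinearMap.comp_apply (TensorProduct.map e _), this, LinearMap.comp_apply,
    Coalgebra.rTensor_counit_comul]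
  simp

theorem rid_counit_of_surjective (hf : Function.Surjective f)
    (hδ : ∀ x, δ (f x) = TensorProduct.map f f (Coalgebra.comul x))
    (he : ∀ x, e (f x) = Coalgebra.counit x) (a : D) :
    TensorProduct.rid R D (TensorProduct.map LinearMap.id e (δ a)) = a := by
  obtain ⟨x, rfl⟩ := hf a
  have : TensorProduct.map LinearMap.id e ∘ₗ TensorProduct.map f f =
      f.rTensor R ∘ₗ Coalgebra.counit.lTensor C := by
    rw [LinearMap.rTensor, LinearMap.lTensor, ← TensorProduct.map_comp, ← TensorProduct.map_comp]
    congr 1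
    exact LinearMap.ext he
  rw [hδ, ← LinearMap.comp_apply (TensorProduct.map _ e), this, LinearMap.comp_apply,
    Coalgebra.lTensor_counit_comul]
  simp

end Transport

section HeapTransport

variable {k : Type*} [Field k] {C D : Type*} [AddCommGroup C] [Module k C]
  [AddCommGroup D] [Module k D] {f : C →ₗ[k] D}

theorem sweedlerShuffle_comp_map :
    sweedlerShuffle k D D D D D D ∘ₗ
        TensorProduct.map (TensorProduct.map f f)
          (TensorProduct.map (TensorProduct.map f f) (TensorProduct.map f f)) =
      TensorProduct.map (TensorProduct.map f (TensorProduct.map f f))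
          (TensorProduct.map f (TensorProduct.map f f)) ∘ₗ
        sweedlerShuffle k C C C C C C := by
  ext
  rfl

variable {χC : (C ⊗[k] (C ⊗[k] C)) →ₗ[k] C} {χD : (D ⊗[k] (D ⊗[k] D)) →ₗ[k] D}

theorem comp_eq_of_map_br (hfχ : ∀ a b c, f (br k χC a b c) = br k χD (f a) (f b) (f c)) :
    f ∘ₗ χC = χD ∘ₗ TensorProduct.map f (TensorProduct.map f f) := by
  ext a b c
  exact hfχ a b c

variable [Coalgebra k C] {δ : D →ₗ[k] D ⊗[k] D} {e : D →ₗ[k] k}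

theorem comul_br_of_surjective (hχC : IsHopfHeap k χC) (hf : Function.Surjective f)
    (hδ : ∀ x, δ (f x) = TensorProduct.map f f (Coalgebra.comul x))
    (hfχ : ∀ a b c, f (br k χC a b c) = br k χD (f a) (f b) (f c)) (a b c : D) :
    δ (br k χD a b c) =
      TensorProduct.map χD χD (sweedlerShuffle k D D D D D D (δ a ⊗ₜ[k] (δ b ⊗ₜ[k] δ c))) := by
  obtain ⟨x, rfl⟩ := hf a
  obtain ⟨y, rfl⟩ := hf b
  obtain ⟨z, rfl⟩ := hf c
  have hnat : TensorProduct.map χD χD ∘ₗ sweedlerShuffle k D D D D D D ∘ₗ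
        TensorProduct.map (TensorProduct.map f f)
          (TensorProduct.map (TensorProduct.map f f) (TensorProduct.map f f)) =
      TensorProduct.map f f ∘ₗ TensorProduct.map χC χC ∘ₗ sweedlerShuffle k C C C C C C := by
    rw [sweedlerShuffle_comp_map, ← LinearMap.comp_assoc, ← TensorProduct.map_comp,
      ← comp_eq_of_map_br hfχ, TensorProduct.map_comp, LinearMap.comp_assoc]
  rw [← hfχ, hδ, hχC.comul_br, hδ, hδ, hδ]
  exact (LinearMap.congr_fun hnat _).symm

theorem left_cancel_of_surjective (hχC : IsHopfHeap k χC) (hf : Function.Surjective f)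
    (hδ : ∀ x, δ (f x) = TensorProduct.map f f (Coalgebra.comul x))
    (he : ∀ x, e (f x) = Coalgebra.counit x)
    (hfχ : ∀ a b c, f (br k χC a b c) = br k χD (f a) (f b) (f c)) (a b : D) :
    χD (TensorProduct.assoc k D D D (δ a ⊗ₜ[k] b)) = e a • b := by
  obtain ⟨x, rfl⟩ := hf a
  obtain ⟨y, rfl⟩ := hf b
  rw [hδ, he, ← map_smul, ← hχC.left_cancel, ← LinearMap.comp_apply f, comp_eq_of_map_br hfχ,
    LinearMap.comp_apply, TensorProduct.map_map_assoc, TensorProduct.map_tmul]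

theorem right_cancel_of_surjective (hχC : IsHopfHeap k χC) (hf : Function.Surjective f)
    (hδ : ∀ x, δ (f x) = TensorProduct.map f f (Coalgebra.comul x))
    (he : ∀ x, e (f x) = Coalgebra.counit x)
    (hfχ : ∀ a b c, f (br k χC a b c) = br k χD (f a) (f b) (f c)) (a b : D) :
    χD (b ⊗ₜ[k] δ a) = e a • b := by
  obtain ⟨x, rfl⟩ := hf a
  obtain ⟨y, rfl⟩ := hf b
  rw [hδ, he, ← map_smul, ← hχC.right_cancel, ← LinearMap.comp_apply f, comp_eq_of_map_br hfχ,
    LinearMap.comp_apply, TensorProduct.map_tmul]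

end HeapTransport

theorem IsRBOp.descComul_apply_eq_map_comul {k : Type*} [Field k] {C : Type*} [AddCommGroup C]
    [Module k C] [Coalgebra k C] {χ : (C ⊗[k] (C ⊗[k] C)) →ₗ[k] C} {B : C →ₗ[k] C}
    (hB : IsRBOp k χ B) (x : C) :
    descComul χ B (B x) = TensorProduct.map B B (Coalgebra.comul x) :=
  (hB.rb x).symm

theorem descendent_hopfHeap_general {k : Type*} [Field k] {C : Type*} [AddCommGroup C] [Module k C]
    [Coalgebra k C] (χ : (C ⊗[k] (C ⊗[k] C)) →ₗ[k] C) (hχ : IsHopfHeap k χ)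
    (B : C →ₗ[k] C) (hB : IsRBOp k χ B)
    (hsurj : Function.Surjective ⇑B)
    (hεB : ∀ a : C, Coalgebra.counit (R := k) (B a) = Coalgebra.counit (R := k) a) :
    -- `Δ'` is coassociative
    (∀ a : C, (TensorProduct.assoc k C C C)
        ((TensorProduct.map (descComul χ B) LinearMap.id) (descComul χ B a)) =
      (TensorProduct.map LinearMap.id (descComul χ B)) (descComul χ B a)) ∧
    -- `ε` is a counit for `Δ'`
    (∀ a : C, (TensorProduct.lid k C)
        ((TensorProduct.map (Coalgebra.counit (R := k)) LinearMap.id) (descComul χ B a)) = a) ∧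
    (∀ a : C, (TensorProduct.rid k C)
        ((TensorProduct.map LinearMap.id (Coalgebra.counit (R := k))) (descComul χ B a)) = a) ∧
    -- the bracket is a coalgebra map with respect to `Δ'`:
    -- `Δ'([a,b,c]) = [a_{1'}, b_{2'}, c_{1'}] ⊗ [a_{2'}, b_{1'}, c_{2'}]`
    (∀ a b c : C, descComul χ B (br k χ a b c) =
      TensorProduct.map χ χ (sweedlerShuffle k C C C C C C
        ((descComul χ B a) ⊗ₜ[k] ((descComul χ B b) ⊗ₜ[k] (descComul χ B c))))) ∧
    -- `[a_{1'}, a_{2'}, b] = ε(a)b = [b, a_{1'}, a_{2'}]`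
    (∀ a b : C, χ ((TensorProduct.assoc k C C C) ((descComul χ B a) ⊗ₜ[k] b)) =
      Coalgebra.counit (R := k) a • b) ∧
    (∀ a b : C, χ (b ⊗ₜ[k] (descComul χ B a)) = Coalgebra.counit (R := k) a • b) := by
  have hδ := hB.descComul_apply_eq_map_comul
  exact ⟨coassoc_of_surjective hsurj hδ, lid_counit_of_surjective hsurj hδ hεB,
    rid_counit_of_surjective hsurj hδ hεB, comul_br_of_surjective hχ hsurj hδ hB.map_br,
    left_cancel_of_surjective hχ hsurj hδ hεB hB.map_br,
    right_cancel_of_surjective hχ hsurj hδ hεB hB.map_br⟩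

/-- for a surjective Rota–Baxter operator `B` on a commutative Hopf heap with
`ε ∘ B = ε`, the descendent comultiplication `Δ'(a) = [a₁, B(a₄), B(a₂)] ⊗ a₃` makes
`C_B = (C, Δ', ε, χ)` a Hopf heap. -/
theorem descendent_hopfHeap {k : Type*} [Field k] {C : Type*} [AddCommGroup C] [Module k C]
    [Coalgebra k C] (χ : (C ⊗[k] (C ⊗[k] C)) →ₗ[k] C) (hχ : IsHopfHeap k χ)
    (hcomm : ∀ a b c : C, br k χ a b c = br k χ c b a)
    (B : C →ₗ[k] C) (hB : IsRBOp k χ B)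
    (hsurj : Function.Surjective ⇑B)
    (hεB : ∀ a : C, Coalgebra.counit (R := k) (B a) = Coalgebra.counit (R := k) a) :
    -- `Δ'` is coassociative
    (∀ a : C, (TensorProduct.assoc k C C C)
        ((TensorProduct.map (descComul χ B) LinearMap.id) (descComul χ B a)) =
      (TensorProduct.map LinearMap.id (descComul χ B)) (descComul χ B a)) ∧
    -- `ε` is a counit for `Δ'`
    (∀ a : C, (TensorProduct.lid k C)
        ((TensorProduct.map (Coalgebra.counit (R := k)) LinearMap.id) (descComul χ B a)) = a) ∧
    (∀ a : C, (TensorProduct.rid k C)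
        ((TensorProduct.map LinearMap.id (Coalgebra.counit (R := k))) (descComul χ B a)) = a) ∧
    -- the bracket is a coalgebra map with respect to `Δ'`:
    -- `Δ'([a,b,c]) = [a_{1'}, b_{2'}, c_{1'}] ⊗ [a_{2'}, b_{1'}, c_{2'}]`
    (∀ a b c : C, descComul χ B (br k χ a b c) =
      TensorProduct.map χ χ (sweedlerShuffle k C C C C C C
        ((descComul χ B a) ⊗ₜ[k] ((descComul χ B b) ⊗ₜ[k] (descComul χ B c))))) ∧
    -- `[a_{1'}, a_{2'}, b] = ε(a)b = [b, a_{1'}, a_{2'}]`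
    (∀ a b : C, χ ((TensorProduct.assoc k C C C) ((descComul χ B a) ⊗ₜ[k] b)) =
      Coalgebra.counit (R := k) a • b) ∧
    (∀ a b : C, χ (b ⊗ₜ[k] (descComul χ B a)) = Coalgebra.counit (R := k) a • b) :=
  descendent_hopfHeap_general χ hχ B hB hsurj hεB
end

section
/- Let (H, Δ, ε, [−,−,−]) be a Hopf heap over a field k, let (M, ▷, ρ) be a left H-Hopf heap module, and let x ∈ H be group-like. Set M^{coH}_x := {m ∈ M : ρ(m) = x ⊗ m}, and equip H ⊗ M^{coH}_x with the coaction h ⊗ m ↦ h₁ ⊗ (h₂ ⊗ m) and the action (a ⊗ b) ▷ (g ⊗ m) := [a,b,g] ⊗ m. Then the map α : H ⊗ M^{coH}_x → M, α(a ⊗ m) = (a ⊗ x) ▷ m, is an isomorphism of left H-Hopf heap modules, with inverse β(m) = m₍₋₁₎ ⊗ P(m₍₀₎), where P(m) := (x ⊗ m₍₋₁₎) ▷ m₍₀₎ (note P takes values in M^{coH}_x). In particular M ≅ H ⊗ M^{coH}_x as left H-Hopf heap modules. -/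
/-!
Two instances of right cancellation drive the proof: `[a, x, x] = a` and `[a, c₁, c₂] = ε(c) a`.
The first gives `(h ⊗ x) ▷ ((x ⊗ c) ▷ s) = (h ⊗ c) ▷ s`, hence
`α (β m) = (m₍₋₁₎ ⊗ m₍₀₎₍₋₁₎) ▷ m₍₀₎₍₀₎ = m` by coassociativity of `ρ`; it also gives
`ρ ((a ⊗ x) ▷ n) = a₁ ⊗ (a₂ ⊗ x) ▷ n` for coinvariant `n`. The second then yields
`P ((a ⊗ x) ▷ n) = ε(a) n`, hence `β (α (a ⊗ n)) = a ⊗ n`, and, again by coassociativity,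
`ρ (P m) = [x, m₍₋₁₎₂, m₍₋₁₎₃] ⊗ (x ⊗ m₍₋₁₎₁) ▷ m₍₀₎ = x ⊗ P m`. Injectivity of `α` follows
because `H ⊗ -` preserves the inclusion of the coinvariants, every module over a field being flat.
-/

open TensorProduct

section Stmt18

variable {k : Type*} [Field k] {H : Type*} [AddCommGroup H] [Module k H] [Coalgebra k H]
  {M : Type*} [AddCommGroup M] [Module k M]

/-- The coinvariants `M^{coH}_x = {m | ρ(m) = x ⊗ m}` of a left coaction. -/
noncomputable def lcoinv (x : H) (ρ : M →ₗ[k] (H ⊗[k] M)) : Submodule k M :=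
  LinearMap.ker (ρ - TensorProduct.mk k H M x)

/-- The projection `P(m) = (x ⊗ m₍₋₁₎) ▷ m₍₀₎`. -/
noncomputable def lP (x : H) (ρ : M →ₗ[k] (H ⊗[k] M))
    (ψ : (H ⊗[k] (H ⊗[k] M)) →ₗ[k] M) : M →ₗ[k] M :=
  ψ ∘ₗ (TensorProduct.mk k H (H ⊗[k] M) x) ∘ₗ ρ

/-- `h ⊗ m ↦ (h ⊗ x) ▷ m` on `H ⊗ M`. -/
noncomputable def lalphaT (x : H) (ψ : (H ⊗[k] (H ⊗[k] M)) →ₗ[k] M) :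
    (H ⊗[k] M) →ₗ[k] M :=
  ψ ∘ₗ TensorProduct.map LinearMap.id (TensorProduct.mk k H M x)

/-- The structure map `α : H ⊗ M^{coH}_x → M`, `a ⊗ m ↦ (a ⊗ x) ▷ m`. -/
noncomputable def lalpha (x : H) (ρ : M →ₗ[k] (H ⊗[k] M))
    (ψ : (H ⊗[k] (H ⊗[k] M)) →ₗ[k] M) : (H ⊗[k] ↥(lcoinv x ρ)) →ₗ[k] M :=
  (lalphaT x ψ) ∘ₗ TensorProduct.map LinearMap.id (lcoinv x ρ).subtype

/-- The map `β₀ : M → H ⊗ M`, `m ↦ m₍₋₁₎ ⊗ P(m₍₀₎)`. -/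
noncomputable def lbeta (x : H) (ρ : M →ₗ[k] (H ⊗[k] M))
    (ψ : (H ⊗[k] (H ⊗[k] M)) →ₗ[k] M) : M →ₗ[k] (H ⊗[k] M) :=
  (TensorProduct.map LinearMap.id (lP x ρ ψ)) ∘ₗ ρ

/-- The coaction `h ⊗ m ↦ h₁ ⊗ (h₂ ⊗ m)` on `H ⊗ M^{coH}_x`. -/
noncomputable def lrhoN (x : H) (ρ : M →ₗ[k] (H ⊗[k] M)) :
    (H ⊗[k] ↥(lcoinv x ρ)) →ₗ[k] (H ⊗[k] (H ⊗[k] ↥(lcoinv x ρ))) :=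
  (TensorProduct.assoc k H H ↥(lcoinv x ρ)).toLinearMap ∘ₗ
    TensorProduct.map Coalgebra.comul LinearMap.id

/-- The action `(a ⊗ b) ▷ (g ⊗ m) = [a,b,g] ⊗ m` on `H ⊗ M^{coH}_x`. -/
noncomputable def lpsiN (χ : (H ⊗[k] (H ⊗[k] H)) →ₗ[k] H) (x : H)
    (ρ : M →ₗ[k] (H ⊗[k] M)) :
    (H ⊗[k] (H ⊗[k] (H ⊗[k] ↥(lcoinv x ρ)))) →ₗ[k] (H ⊗[k] ↥(lcoinv x ρ)) :=
  (TensorProduct.map χ LinearMap.id) ∘ₗ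
    (TensorProduct.assoc k H (H ⊗[k] H) ↥(lcoinv x ρ)).symm.toLinearMap ∘ₗ
    (TensorProduct.map LinearMap.id
      (TensorProduct.assoc k H H ↥(lcoinv x ρ)).symm.toLinearMap)

end Stmt18

section HopfHeapModule

open Coalgebra

variable {k : Type*} [Field k]

@[simp]
theorem sweedlerShuffle_tmul {A B P Q R S : Type*}
    [AddCommGroup A] [Module k A] [AddCommGroup B] [Module k B]
    [AddCommGroup P] [Module k P] [AddCommGroup Q] [Module k Q]
    [AddCommGroup R] [Module k R] [AddCommGroup S] [Module k S]
    (a : A) (b : B) (p : P) (q : Q) (r : R) (s : S) :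
    sweedlerShuffle k A B P Q R S ((a ⊗ₜ[k] b) ⊗ₜ[k] ((p ⊗ₜ[k] q) ⊗ₜ[k] (r ⊗ₜ[k] s))) =
      (a ⊗ₜ[k] (q ⊗ₜ[k] r)) ⊗ₜ[k] (b ⊗ₜ[k] (p ⊗ₜ[k] s)) :=
  rfl

variable {H : Type*} [AddCommGroup H] [Module k H] {M : Type*} [AddCommGroup M] [Module k M]

theorem mem_lcoinv_iff {x : H} {ρ : M →ₗ[k] (H ⊗[k] M)} {m : M} :
    m ∈ lcoinv x ρ ↔ ρ m = x ⊗ₜ[k] m := by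
  rw [lcoinv, LinearMap.mem_ker, LinearMap.sub_apply, sub_eq_zero, TensorProduct.mk_apply]

theorem lalpha_tmul {x : H} {ρ : M →ₗ[k] (H ⊗[k] M)} {ψ : (H ⊗[k] (H ⊗[k] M)) →ₗ[k] M} (a : H)
    (n : lcoinv x ρ) : lalpha x ρ ψ (a ⊗ₜ[k] n) = lalphaT x ψ (a ⊗ₜ[k] (n : M)) :=
  rfl

variable [Coalgebra k H]

variable (k) in
structure IsHopfHeapModule (χ : (H ⊗[k] (H ⊗[k] H)) →ₗ[k] H) (ρ : M →ₗ[k] (H ⊗[k] M))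
    (ψ : (H ⊗[k] (H ⊗[k] M)) →ₗ[k] M) : Prop where
  coassoc : ∀ m : M, TensorProduct.assoc k H H M ((comul (R := k)).rTensor M (ρ m)) =
    ρ.lTensor H (ρ m)
  counit : ∀ m : M, TensorProduct.lid k M ((counit (R := k)).rTensor M (ρ m)) = m
  act_br : ∀ (a b c d : H) (m : M),
    ψ (br k χ a b c ⊗ₜ[k] (d ⊗ₜ[k] m)) = ψ (a ⊗ₜ[k] (b ⊗ₜ[k] ψ (c ⊗ₜ[k] (d ⊗ₜ[k] m))))
  act_comul : ∀ (c : H) (m : M),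
    ψ (TensorProduct.assoc k H H M (comul (R := k) c ⊗ₜ[k] m)) =
      Coalgebra.counit (R := k) c • m
  coaction_act : ∀ (c d : H) (m : M),
    ρ (ψ (c ⊗ₜ[k] (d ⊗ₜ[k] m))) =
      map χ ψ (sweedlerShuffle k H H H H H M
        (comul (R := k) c ⊗ₜ[k] (comul (R := k) d ⊗ₜ[k] ρ m)))

variable {χ : (H ⊗[k] (H ⊗[k] H)) →ₗ[k] H} {x : H}

theorem IsHopfHeap.br_grouplike_grouplike (hχ : IsHopfHeap k χ) (hx : IsGrouplike k x) (a : H) :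
    χ (a ⊗ₜ[k] (x ⊗ₜ[k] x)) = a := by
  simpa [hx.1, hx.2] using hχ.right_cancel x a

theorem IsHopfHeap.map_comp_mk_comul2 (hχ : IsHopfHeap k χ) {N : Type*} [AddCommGroup N]
    [Module k N] (f : H →ₗ[k] N) (a c : H) :
    map f (χ ∘ₗ TensorProduct.mk k H (H ⊗[k] H) a) (comul2 k c) = f c ⊗ₜ[k] a := by
  have key : ∀ w : H ⊗[k] H,
      map f (χ ∘ₗ TensorProduct.mk k H (H ⊗[k] H) a)
        ((comul (R := k)).lTensor H w) =
      f (TensorProduct.rid k H ((counit (R := k)).lTensor H w)) ⊗ₜ[k] a := by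
    intro w
    induction w using TensorProduct.induction_on with
    | zero => simp
    | add u v hu hv => simp only [map_add, add_tmul, hu, hv]
    | tmul b d => simp [hχ.right_cancel, smul_tmul]
  rw [comul2, LinearMap.comp_apply, ← LinearMap.lTensor_def, key,
    Coalgebra.lTensor_counit_comul, TensorProduct.rid_tmul, one_smul]

-- In Sweedler notation: `Σ [a, c₂, c₃] ⊗ ψ (b ⊗ c₁ ⊗ s) = a ⊗ ψ (b ⊗ c ⊗ s)`.
theorem IsHopfHeap.map_sweedlerShuffle_rTensor_comul (hχ : IsHopfHeap k χ)
    (ψ : (H ⊗[k] (H ⊗[k] M)) →ₗ[k] M) (a b : H) (t : H ⊗[k] M) :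
    map χ ψ (sweedlerShuffle k H H H H H M ((a ⊗ₜ[k] b) ⊗ₜ[k]
        (comul (R := k)).rTensor (H ⊗[k] M) (TensorProduct.assoc k H H M
          ((comul (R := k)).rTensor M t)))) =
      a ⊗ₜ[k] ψ (b ⊗ₜ[k] t) := by
  induction t using TensorProduct.induction_on with
  | zero => simp
  | add u v hu hv => simp only [map_add, tmul_add, hu, hv]
  | tmul c s =>
    have hshuffle : ∀ v : H ⊗[k] (H ⊗[k] H), map χ ψ (sweedlerShuffle k H H H H H M
        ((a ⊗ₜ[k] b) ⊗ₜ[k] TensorProduct.assoc k (H ⊗[k] H) H M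
          ((TensorProduct.assoc k H H H).symm v ⊗ₜ[k] s))) =
        TensorProduct.comm k M H (map (ψ ∘ₗ TensorProduct.mk k H (H ⊗[k] M) b ∘ₗ
          (TensorProduct.mk k H M).flip s) (χ ∘ₗ TensorProduct.mk k H (H ⊗[k] H) a) v) := by
      intro v
      induction v using TensorProduct.induction_on with
      | zero => simp
      | add u v hu hv => simp only [map_add, add_tmul, tmul_add, hu, hv]
      | tmul p w =>
        induction w using TensorProduct.induction_on with
        | zero => simp
        | add u v hu hv => simp only [map_add, add_tmul, tmul_add, hu, hv]
        | tmul q r => simp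
    simp only [LinearMap.rTensor_tmul, LinearMap.rTensor_tensor, LinearMap.comp_apply,
      LinearEquiv.coe_coe, LinearEquiv.symm_apply_apply]
    rw [← coassoc_symm_apply, hshuffle,
      show (comul (R := k)).lTensor H (comul c) = comul2 k c from rfl, hχ.map_comp_mk_comul2]
    rfl

variable {ρ : M →ₗ[k] (H ⊗[k] M)} {ψ : (H ⊗[k] (H ⊗[k] M)) →ₗ[k] M}

theorem lrhoN_tmul (a : H) (n : lcoinv x ρ) :
    lrhoN x ρ (a ⊗ₜ[k] n) =
      TensorProduct.assoc k H H (lcoinv x ρ) (comul (R := k) a ⊗ₜ[k] n) :=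
  rfl

namespace IsHopfHeapModule

theorem act_grouplike_grouplike (hM : IsHopfHeapModule k χ ρ ψ) (hx : IsGrouplike k x) (m : M) :
    ψ (x ⊗ₜ[k] (x ⊗ₜ[k] m)) = m := by
  simpa [hx.1, hx.2] using hM.act_comul x m

theorem act_assoc_rTensor_comul (hM : IsHopfHeapModule k χ ρ ψ) (t : H ⊗[k] M) :
    ψ (TensorProduct.assoc k H H M ((comul (R := k)).rTensor M t)) =
      TensorProduct.lid k M ((Coalgebra.counit (R := k)).rTensor M t) := by
  induction t using TensorProduct.induction_on with
  | zero => simp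
  | add u v hu hv => simp only [map_add, hu, hv]
  | tmul c m => simp [hM.act_comul]

theorem act_act_grouplike (hM : IsHopfHeapModule k χ ρ ψ) (hχ : IsHopfHeap k χ)
    (hx : IsGrouplike k x) (h : H) (t : H ⊗[k] M) :
    ψ (h ⊗ₜ[k] (x ⊗ₜ[k] ψ (x ⊗ₜ[k] t))) = ψ (h ⊗ₜ[k] t) := by
  induction t using TensorProduct.induction_on with
  | zero => simp
  | add u v hu hv => simp only [tmul_add, map_add, hu, hv]
  | tmul c m => rw [← hM.act_br, br, hχ.br_grouplike_grouplike hx]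

theorem lalphaT_lbeta (hM : IsHopfHeapModule k χ ρ ψ) (hχ : IsHopfHeap k χ)
    (hx : IsGrouplike k x) (m : M) : lalphaT x ψ (lbeta x ρ ψ m) = m := by
  have hP : ∀ t : H ⊗[k] M, lalphaT x ψ ((lP x ρ ψ).lTensor H t) = ψ (ρ.lTensor H t) := by
    intro t
    induction t using TensorProduct.induction_on with
    | zero => simp
    | add u v hu hv => simp only [map_add, hu, hv]
    | tmul h n => exact hM.act_act_grouplike hχ hx h (ρ n)
  calc lalphaT x ψ (lbeta x ρ ψ m) = ψ (ρ.lTensor H (ρ m)) := hP (ρ m)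
    _ = TensorProduct.lid k M ((Coalgebra.counit (R := k)).rTensor M (ρ m)) := by
      rw [← hM.coassoc, hM.act_assoc_rTensor_comul]
    _ = m := hM.counit m

variable {n : M}

theorem coaction_lalphaT_tmul (hM : IsHopfHeapModule k χ ρ ψ) (hχ : IsHopfHeap k χ)
    (hx : IsGrouplike k x) (hn : ρ n = x ⊗ₜ[k] n) (a : H) :
    ρ (lalphaT x ψ (a ⊗ₜ[k] n)) =
      (lalphaT x ψ).lTensor H (TensorProduct.assoc k H H M (comul (R := k) a ⊗ₜ[k] n)) := by
  change ρ (ψ (a ⊗ₜ[k] (x ⊗ₜ[k] n))) = _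
  rw [hM.coaction_act, hx.1, hn]
  induction comul (R := k) a using TensorProduct.induction_on with
  | zero => simp
  | add u v hu hv => simp only [add_tmul, map_add, hu, hv]
  | tmul p q => simp [lalphaT, hχ.br_grouplike_grouplike hx]

theorem lP_lalphaT_tmul (hM : IsHopfHeapModule k χ ρ ψ) (hχ : IsHopfHeap k χ)
    (hx : IsGrouplike k x) (hn : ρ n = x ⊗ₜ[k] n) (q : H) :
    lP x ρ ψ (lalphaT x ψ (q ⊗ₜ[k] n)) = Coalgebra.counit (R := k) q • n := by
  have key : ∀ u : H ⊗[k] H,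
      ψ (x ⊗ₜ[k] (lalphaT x ψ).lTensor H (TensorProduct.assoc k H H M (u ⊗ₜ[k] n))) =
        ψ (χ (x ⊗ₜ[k] u) ⊗ₜ[k] (x ⊗ₜ[k] n)) := by
    intro u
    induction u using TensorProduct.induction_on with
    | zero => simp
    | add u v hu hv => simp only [add_tmul, tmul_add, map_add, hu, hv]
    | tmul p r => exact (hM.act_br x p r x n).symm
  change ψ (x ⊗ₜ[k] ρ (lalphaT x ψ (q ⊗ₜ[k] n))) = _
  rw [hM.coaction_lalphaT_tmul hχ hx hn, key, hχ.right_cancel, ← smul_tmul', map_smul,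
    hM.act_grouplike_grouplike hx]

theorem lbeta_lalphaT_tmul (hM : IsHopfHeapModule k χ ρ ψ) (hχ : IsHopfHeap k χ)
    (hx : IsGrouplike k x) (hn : ρ n = x ⊗ₜ[k] n) (a : H) :
    lbeta x ρ ψ (lalphaT x ψ (a ⊗ₜ[k] n)) = a ⊗ₜ[k] n := by
  have key : ∀ u : H ⊗[k] H,
      (lP x ρ ψ).lTensor H ((lalphaT x ψ).lTensor H (TensorProduct.assoc k H H M (u ⊗ₜ[k] n))) =
        TensorProduct.rid k H ((Coalgebra.counit (R := k)).lTensor H u) ⊗ₜ[k] n := by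
    intro u
    induction u using TensorProduct.induction_on with
    | zero => simp
    | add u v hu hv => simp only [add_tmul, map_add, hu, hv]
    | tmul p r => simp [hM.lP_lalphaT_tmul hχ hx hn, smul_tmul]
  change (lP x ρ ψ).lTensor H (ρ (lalphaT x ψ (a ⊗ₜ[k] n))) = _
  rw [hM.coaction_lalphaT_tmul hχ hx hn, key, Coalgebra.lTensor_counit_comul,
    TensorProduct.rid_tmul, one_smul]

theorem coaction_lP (hM : IsHopfHeapModule k χ ρ ψ) (hχ : IsHopfHeap k χ)
    (hx : IsGrouplike k x) (m : M) : ρ (lP x ρ ψ m) = x ⊗ₜ[k] lP x ρ ψ m := by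
  have hρψ : ∀ t : H ⊗[k] M, ρ (ψ (x ⊗ₜ[k] t)) = map χ ψ
      (sweedlerShuffle k H H H H H M ((x ⊗ₜ[k] x) ⊗ₜ[k] map (comul (R := k)) ρ t)) := by
    intro t
    induction t using TensorProduct.induction_on with
    | zero => simp
    | add u v hu hv => simp only [tmul_add, map_add, hu, hv]
    | tmul c s => rw [hM.coaction_act, hx.1, map_tmul]
  have hcoassoc : map (comul (R := k)) ρ (ρ m) =
      (comul (R := k)).rTensor (H ⊗[k] M)
        (TensorProduct.assoc k H H M ((comul (R := k)).rTensor M (ρ m))) := by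
    rw [hM.coassoc, ← LinearMap.rTensor_comp_lTensor, LinearMap.comp_apply]
  calc ρ (lP x ρ ψ m) = ρ (ψ (x ⊗ₜ[k] ρ m)) := rfl
    _ = x ⊗ₜ[k] ψ (x ⊗ₜ[k] ρ m) := by
      rw [hρψ, hcoassoc, hχ.map_sweedlerShuffle_rTensor_comul]

theorem lP_mem_lcoinv (hM : IsHopfHeapModule k χ ρ ψ) (hχ : IsHopfHeap k χ)
    (hx : IsGrouplike k x) (m : M) : lP x ρ ψ m ∈ lcoinv x ρ :=
  mem_lcoinv_iff.2 (hM.coaction_lP hχ hx m)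

theorem lbeta_lalpha (hM : IsHopfHeapModule k χ ρ ψ) (hχ : IsHopfHeap k χ)
    (hx : IsGrouplike k x) (z : H ⊗[k] lcoinv x ρ) :
    lbeta x ρ ψ (lalpha x ρ ψ z) = (lcoinv x ρ).subtype.lTensor H z := by
  induction z using TensorProduct.induction_on with
  | zero => simp
  | add u v hu hv => simp only [map_add, hu, hv]
  | tmul a n => exact hM.lbeta_lalphaT_tmul hχ hx (mem_lcoinv_iff.1 n.2) a

theorem coaction_lalpha (hM : IsHopfHeapModule k χ ρ ψ) (hχ : IsHopfHeap k χ)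
    (hx : IsGrouplike k x) (z : H ⊗[k] lcoinv x ρ) :
    ρ (lalpha x ρ ψ z) = (lalpha x ρ ψ).lTensor H (lrhoN x ρ z) := by
  induction z using TensorProduct.induction_on with
  | zero => simp
  | add u v hu hv => simp only [map_add, hu, hv]
  | tmul a n =>
    rw [lalpha_tmul, hM.coaction_lalphaT_tmul hχ hx (mem_lcoinv_iff.1 n.2), lrhoN_tmul]
    induction comul (R := k) a using TensorProduct.induction_on with
    | zero => simp
    | add u v hu hv => simp only [add_tmul, map_add, hu, hv]
    | tmul p q => rfl

theorem lalpha_lpsiN (hM : IsHopfHeapModule k χ ρ ψ) (a b : H) (z : H ⊗[k] lcoinv x ρ) :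
    lalpha x ρ ψ (lpsiN χ x ρ (a ⊗ₜ[k] (b ⊗ₜ[k] z))) = ψ (a ⊗ₜ[k] (b ⊗ₜ[k] lalpha x ρ ψ z)) := by
  induction z using TensorProduct.induction_on with
  | zero => simp
  | add u v hu hv => simp only [tmul_add, map_add, hu, hv]
  | tmul g n => exact hM.act_br a b g x n

theorem lalpha_bijective (hM : IsHopfHeapModule k χ ρ ψ) (hχ : IsHopfHeap k χ)
    (hx : IsGrouplike k x) : Function.Bijective (lalpha x ρ ψ) := by
  refine ⟨fun z z' h => ?_, fun m => ?_⟩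
  · apply Module.Flat.lTensor_preserves_injective_linearMap _ (lcoinv x ρ).injective_subtype
    rw [← hM.lbeta_lalpha hχ hx, ← hM.lbeta_lalpha hχ hx, h]
  · let P : M →ₗ[k] lcoinv x ρ := LinearMap.codRestrict _ (lP x ρ ψ) (hM.lP_mem_lcoinv hχ hx)
    refine ⟨P.lTensor H (ρ m), ?_⟩
    rw [lalpha, LinearMap.comp_apply, ← LinearMap.lTensor, ← LinearMap.lTensor_comp_apply,
      LinearMap.subtype_comp_codRestrict]
    exact hM.lalphaT_lbeta hχ hx m

end IsHopfHeapModule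

end HopfHeapModule

/-- structure theorem for Hopf heap modules: for a left `H`-Hopf heap module
`(M, ▷, ρ)` and a group-like `x ∈ H`, the map `α : H ⊗ M^{coH}_x → M`,
`a ⊗ m ↦ (a ⊗ x) ▷ m`, is an isomorphism of left `H`-Hopf heap modules, with inverse
`β(m) = m₍₋₁₎ ⊗ P(m₍₀₎)` where `P(m) = (x ⊗ m₍₋₁₎) ▷ m₍₀₎`. -/
theorem hopfHeapModule_structure_theorem {k : Type*} [Field k] {H : Type*} [AddCommGroup H]
    [Module k H] [Coalgebra k H] {M : Type*} [AddCommGroup M] [Module k M]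
    (χ : (H ⊗[k] (H ⊗[k] H)) →ₗ[k] H) (hχ : IsHopfHeap k χ)
    (x : H) (hx : IsGrouplike k x)
    (ρ : M →ₗ[k] (H ⊗[k] M)) (ψ : (H ⊗[k] (H ⊗[k] M)) →ₗ[k] M)
    -- `(M, ρ)` is a coassociative counital left comodule
    (hcoassoc : ∀ m : M, (TensorProduct.assoc k H H M)
        ((TensorProduct.map (Coalgebra.comul (R := k)) LinearMap.id) (ρ m)) =
      (TensorProduct.map LinearMap.id ρ) (ρ m))
    (hcounit : ∀ m : M, (TensorProduct.lid k M)
        ((TensorProduct.map (Coalgebra.counit (R := k)) LinearMap.id) (ρ m)) = m)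
    -- `([a,b,c] ⊗ d) ▷ m = (a ⊗ b) ▷ ((c ⊗ d) ▷ m)`
    (hact1 : ∀ (a b c d : H) (m : M),
      ψ (br k χ a b c ⊗ₜ[k] (d ⊗ₜ[k] m)) = ψ (a ⊗ₜ[k] (b ⊗ₜ[k] ψ (c ⊗ₜ[k] (d ⊗ₜ[k] m)))))
    -- `(c₁ ⊗ c₂) ▷ m = ε(c) m`
    (hact2 : ∀ (c : H) (m : M),
      ψ ((TensorProduct.assoc k H H M) ((Coalgebra.comul (R := k) c) ⊗ₜ[k] m)) =
        Coalgebra.counit (R := k) c • m)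
    -- `ρ((c ⊗ d) ▷ m) = [c₁, d₂, m₍₋₁₎] ⊗ ((c₂ ⊗ d₁) ▷ m₍₀₎)`
    (hact3 : ∀ (c d : H) (m : M),
      ρ (ψ (c ⊗ₜ[k] (d ⊗ₜ[k] m))) =
        (TensorProduct.map χ ψ) (sweedlerShuffle k H H H H H M
          ((Coalgebra.comul (R := k) c) ⊗ₜ[k]
            ((Coalgebra.comul (R := k) d) ⊗ₜ[k] (ρ m))))) :
    -- `P` takes values in `M^{coH}_x`
    (∀ m : M, lP x ρ ψ m ∈ lcoinv x ρ) ∧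
    -- `α` is bijective
    Function.Bijective ⇑(lalpha x ρ ψ) ∧
    -- `α` is a comodule map
    (∀ z : H ⊗[k] ↥(lcoinv x ρ), ρ (lalpha x ρ ψ z) =
      (TensorProduct.map LinearMap.id (lalpha x ρ ψ)) (lrhoN x ρ z)) ∧
    -- `α` commutes with the actions
    (∀ (a b : H) (z : H ⊗[k] ↥(lcoinv x ρ)),
      lalpha x ρ ψ (lpsiN χ x ρ (a ⊗ₜ[k] (b ⊗ₜ[k] z))) =
        ψ (a ⊗ₜ[k] (b ⊗ₜ[k] lalpha x ρ ψ z))) ∧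
    -- `β` is a two-sided inverse of `α`
    (∀ m : M, lalphaT x ψ (lbeta x ρ ψ m) = m) ∧
    (∀ z : H ⊗[k] ↥(lcoinv x ρ), lbeta x ρ ψ (lalpha x ρ ψ z) =
      (TensorProduct.map LinearMap.id (lcoinv x ρ).subtype) z) := by
  have hM : IsHopfHeapModule k χ ρ ψ := ⟨hcoassoc, hcounit, hact1, hact2, hact3⟩
  exact ⟨hM.lP_mem_lcoinv hχ hx, hM.lalpha_bijective hχ hx, hM.coaction_lalpha hχ hx,
    hM.lalpha_lpsiN, hM.lalphaT_lbeta hχ hx, hM.lbeta_lalpha hχ hx⟩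
end
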